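/- arXiv:1411.1817 — 3 statements merged into one kernel-verified Lean document; each statement's English description precedes it below -/
import Mathlib

section
/- Let α : ℝⁿ × ℝⁿ → ℝⁿ be antisymmetric, i.e. α(x,y) = -α(y,x) for all x,y, and let f : ℝⁿ × ℝⁿ → ℝⁿ be such that the function (x,y) ↦ (f(x,y) + f(y,x)) · α(x,y) is (Lebesgue) integrable on ℝⁿ × ℝⁿ. Then ∫_{ℝⁿ} D(f)(x) dx = 0; equivalently, for every measurable set Ω ⊆ ℝⁿ, ∫_Ω D(f)(x) dx = -∫_{ℝⁿ \ Ω} D(f)(x) dx (the nonlocal divergence theorem). -/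
open MeasureTheory RealInnerProductSpace

/-- Euclidean space `ℝⁿ`. -/
abbrev Euc (n : ℕ) := EuclideanSpace ℝ (Fin n)

/-- The nonlocal divergence `D(f)(x) := ∫_{ℝⁿ} (f(x,y) + f(y,x)) · α(x,y) dy`. -/
noncomputable def nldiv {n : ℕ} (a f : Euc n → Euc n → Euc n) (x : Euc n) : ℝ :=
  ∫ y, ⟪f x y + f y x, a x y⟫

/-- The nonlocal divergence theorem: if `α` is antisymmetric and the integrand defining
`D(f)` is integrable on `ℝⁿ × ℝⁿ`, then `∫_{ℝⁿ} D(f) = 0`; equivalently, for every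
measurable `Ω`, `∫_Ω D(f) = -∫_{ℝⁿ \ Ω} D(f)`. -/
theorem nonlocal_divergence_theorem {n : ℕ}
    (a f : Euc n → Euc n → Euc n)
    (ha : ∀ x y, a x y = - a y x)
    (hf : Integrable (fun p : Euc n × Euc n => ⟪f p.1 p.2 + f p.2 p.1, a p.1 p.2⟫)) :
    (∫ x, nldiv a f x) = 0 ∧
      ∀ Ω : Set (Euc n), MeasurableSet Ω →
        (∫ x in Ω, nldiv a f x) = - ∫ x in Ωᶜ, nldiv a f x := by
  set F : Euc n × Euc n → ℝ := fun p => ⟪f p.1 p.2 + f p.2 p.1, a p.1 p.2⟫ with hF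
  have hanti : ∀ p : Euc n × Euc n, F p.swap = - F p := by
    intro p
    simp only [hF, Prod.fst_swap, Prod.snd_swap, ha p.2 p.1, inner_neg_right]
    rw [add_comm]
  have hswap : (∫ p, F p) = ∫ p : Euc n × Euc n, F p.swap :=
    (integral_prod_swap F).symm
  have hzero : (∫ p, F p) = 0 := by
    have h := hswap
    simp only [hanti, integral_neg] at h
    linarith
  have hf' : Integrable (Function.uncurry fun x y => (⟪f x y + f y x, a x y⟫ : ℝ))
      ((volume : Measure (Euc n)).prod volume) := by
    rw [← Measure.volume_eq_prod]; exact hf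
  have hfub : (∫ x, nldiv a f x) = ∫ p, F p := by
    rw [show (∫ p, F p) = ∫ p, F p ∂((volume : Measure (Euc n)).prod volume) by
      rw [← Measure.volume_eq_prod]]
    simpa only [nldiv] using integral_integral hf'
  have hint : Integrable (nldiv a f) := hf'.integral_prod_left
  have h1 : (∫ x, nldiv a f x) = 0 := by rw [hfub, hzero]
  refine ⟨h1, fun Ω hΩ => ?_⟩
  have := integral_add_compl hΩ hint
  rw [h1] at this
  linarith
end

section
/- Let Ω, Ω_d ⊆ ℝⁿ be disjoint measurable sets, let γ : ℝⁿ × ℝⁿ → ℝ, and fix t ≥ 0. Suppose u(·,t) : ℝⁿ → ℝ is integrable on Ω, u(x,t) = 0 for all x ∈ Ω_d (the volume constraint), and the functions (x,y) ↦ u(y,t) γ(y,x) and (x,y) ↦ u(x,t) γ(x,y) are integrable on Ω × (Ω ∪ Ω_d). If ∂_t u(x,t) = ∫_{Ω ∪ Ω_d} ( u(y,t) γ(y,x) − u(x,t) γ(x,y) ) dy for every x ∈ Ω, then ∫_Ω ∂_t u(x,t) dx = − ∫_Ω ∫_{Ω_d} u(x,t) γ(x,y) dy dx. In particular, if u(·,t)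 ≥ 0 on Ω and γ ≥ 0 on Ω × Ω_d, then ∫_Ω ∂_t u(x,t) dx ≤ 0. -/
open MeasureTheory

/-- Probability flux out of `Ω` into the exit region `Ω_d` at a fixed time: if `u`
(the density `u(·,t)` at the fixed time `t`) satisfies the volume constraint `u = 0` on
`Ω_d` and `ut` (the time derivative `∂_t u(·,t)`) satisfies the volume-constrained
master equation on `Ω`, then `∫_Ω ∂_t u dx = −∫_Ω ∫_{Ω_d} u(x) γ(x,y) dy dx`; in
particular, if `u ≥ 0` on `Ω` and `γ ≥ 0` on `Ω × Ω_d`, then `∫_Ω ∂_t u dx ≤ 0`. -/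
theorem exit_time_probability_flux {n : ℕ}
    (Ω Ωd : Set (Euc n)) (hΩ : MeasurableSet Ω) (hΩd : MeasurableSet Ωd)
    (hdisj : Disjoint Ω Ωd)
    (γ : Euc n → Euc n → ℝ)
    (u : Euc n → ℝ) (ut : Euc n → ℝ)
    (hu : IntegrableOn u Ω)
    (hvc : ∀ x ∈ Ωd, u x = 0)
    (hint1 : IntegrableOn (fun p : Euc n × Euc n => u p.2 * γ p.2 p.1) (Ω ×ˢ (Ω ∪ Ωd)))
    (hint2 : IntegrableOn (fun p : Euc n × Euc n => u p.1 * γ p.1 p.2) (Ω ×ˢ (Ω ∪ Ωd)))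
    (hmaster : ∀ x ∈ Ω, ut x = ∫ y in Ω ∪ Ωd, (u y * γ y x - u x * γ x y)) :
    (∫ x in Ω, ut x) = -∫ x in Ω, ∫ y in Ωd, u x * γ x y ∧
      ((∀ x ∈ Ω, 0 ≤ u x) → (∀ x ∈ Ω, ∀ y ∈ Ωd, 0 ≤ γ x y) →
        (∫ x in Ω, ut x) ≤ 0) := by
  have hvol : (volume : Measure (Euc n × Euc n)) = (volume : Measure (Euc n)).prod volume :=
    rfl
  -- rewrite product-set integrability as integrability w.r.t. product of restricted measures
  have hrestr : ∀ (S : Set (Euc n)),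
      (volume : Measure (Euc n × Euc n)).restrict (Ω ×ˢ S)
        = ((volume : Measure (Euc n)).restrict Ω).prod (volume.restrict S) := by
    intro S
    rw [hvol, Measure.prod_restrict]
  have h1 : Integrable (fun p : Euc n × Euc n => u p.2 * γ p.2 p.1)
      (((volume : Measure (Euc n)).restrict Ω).prod (volume.restrict (Ω ∪ Ωd))) := by
    rw [← hrestr]; exact hint1
  have h2 : Integrable (fun p : Euc n × Euc n => u p.1 * γ p.1 p.2)
      (((volume : Measure (Euc n)).restrict Ω).prod (volume.restrict (Ω ∪ Ωd))) := by
    rw [← hrestr]; exact hint2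
  have h1Ω : Integrable (fun p : Euc n × Euc n => u p.2 * γ p.2 p.1)
      (((volume : Measure (Euc n)).restrict Ω).prod (volume.restrict Ω)) := by
    rw [← hrestr]
    exact hint1.mono_set (Set.prod_mono subset_rfl Set.subset_union_left)
  have h2Ω : Integrable (fun p : Euc n × Euc n => u p.1 * γ p.1 p.2)
      (((volume : Measure (Euc n)).restrict Ω).prod (volume.restrict Ω)) := by
    rw [← hrestr]
    exact hint2.mono_set (Set.prod_mono subset_rfl Set.subset_union_left)
  have h2Ωd : Integrable (fun p : Euc n × Euc n => u p.1 * γ p.1 p.2)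
      (((volume : Measure (Euc n)).restrict Ω).prod (volume.restrict Ωd)) := by
    rw [← hrestr]
    exact hint2.mono_set (Set.prod_mono subset_rfl Set.subset_union_right)
  -- step 1: split the master equation integral
  have key : (∫ x in Ω, ut x)
      = (∫ x in Ω, ∫ y in Ω ∪ Ωd, u y * γ y x)
        - ∫ x in Ω, ∫ y in Ω ∪ Ωd, u x * γ x y := by
    rw [← integral_integral_sub h1 h2]
    exact setIntegral_congr_fun hΩ fun x hx => hmaster x hx
  -- the first double integral only sees y ∈ Ω (volume constraint), then swap
  have hA : (∫ x in Ω, ∫ y in Ω ∪ Ωd, u y * γ y x)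
      = ∫ x in Ω, ∫ y in Ω, u x * γ x y := by
    have step1 : (∫ x in Ω, ∫ y in Ω ∪ Ωd, u y * γ y x)
        = ∫ x in Ω, ∫ y in Ω, u y * γ y x := by
      apply integral_congr_ae
      filter_upwards [h1.prod_right_ae] with x hx
      have hxΩ : IntegrableOn (fun y => u y * γ y x) Ω :=
        MeasureTheory.IntegrableOn.mono_set hx Set.subset_union_left
      have hxΩd : IntegrableOn (fun y => u y * γ y x) Ωd :=
        MeasureTheory.IntegrableOn.mono_set hx Set.subset_union_right
      rw [setIntegral_union hdisj hΩd hxΩ hxΩd]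
      have : (∫ y in Ωd, u y * γ y x) = 0 := by
        rw [setIntegral_congr_fun hΩd (g := fun _ => (0:ℝ)) (fun y hy => by simp [hvc y hy])]
        simp
      rw [this, add_zero]
    have hswap := integral_integral_swap
      (μ := (volume : Measure (Euc n)).restrict Ω)
      (ν := (volume : Measure (Euc n)).restrict Ω)
      (f := fun x y => u y * γ y x) h1Ω
    rw [step1, hswap]
  -- split the second double integral
  have hB : (∫ x in Ω, ∫ y in Ω ∪ Ωd, u x * γ x y)
      = (∫ x in Ω, ∫ y in Ω, u x * γ x y) + ∫ x in Ω, ∫ y in Ωd, u x * γ x y := by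
    rw [← integral_add h2Ω.integral_prod_left h2Ωd.integral_prod_left]
    apply integral_congr_ae
    filter_upwards [h2.prod_right_ae] with x hx
    have hxΩ : IntegrableOn (fun y => u x * γ x y) Ω :=
      MeasureTheory.IntegrableOn.mono_set hx Set.subset_union_left
    have hxΩd : IntegrableOn (fun y => u x * γ x y) Ωd :=
      MeasureTheory.IntegrableOn.mono_set hx Set.subset_union_right
    exact setIntegral_union hdisj hΩd hxΩ hxΩd
  have main : (∫ x in Ω, ut x) = -∫ x in Ω, ∫ y in Ωd, u x * γ x y := by
    rw [key, hA, hB]; ring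
  refine ⟨main, fun hu0 hγ0 => ?_⟩
  rw [main, neg_nonpos]
  apply setIntegral_nonneg hΩ
  intro x hx
  apply setIntegral_nonneg hΩd
  intro y hy
  exact mul_nonneg (hu0 x hx) (hγ0 x hx y hy)
end

section
/- Let Ω, Ω_d ⊆ ℝⁿ be disjoint measurable sets with Ω of finite measure, let γ : ℝⁿ × ℝⁿ → ℝ, and let u : ℝⁿ × [0,∞) → ℝ satisfy, for each t ≥ 0: u(·,t) integrable on Ω; u(x,t) = 0 for x ∈ Ω_d; ∂_t u(x,t) = ∫_{Ω ∪ Ω_d} ( u(y,t) γ(y,x) − u(x,t) γ(x,y) ) dy for x ∈ Ω with all integrands integrable on Ω × (Ω ∪ Ω_d); |∂_t u(x,t)| ≤ g(x) for some integrable g; and s ↦ ∫_Ω ∫_{Ω_d} u(x,s) γ(x,y) dy dx continuous. Then for all t ≥ 0, ∫_Ω u(x,t) dx = ∫_Ω u(x,0) dx − ∫_0^t ∫_Ω ∫_{Ω_d} u(x,s) γ(x,y) dy dx ds; that is, the loss of probability mass from Ω up to time t equals the time-integrated probability flux from Ω into the exit region Ω_d. -/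
/-!
Integrate the master equation over `Ω`. Since `u` vanishes on `Ω_d`, the gain term
`∫_Ω ∫_{Ω ∪ Ω_d} u(y) γ(y,x)` only sees `y ∈ Ω`, and by Fubini it cancels the part of the loss
term with `y ∈ Ω`; what is left is minus the flux into `Ω_d`. The derivative of `u(x,·)` is
dominated by `g`, so the mass `t ↦ ∫_Ω u(x,t) dx` is Lipschitz and can be differentiated under
the integral sign, and the fundamental theorem of calculus integrates the balance in time.
-/

open MeasureTheory

open Set Filter Topology

section Flux

variable {α : Type*} [MeasurableSpace α] {μ : Measure α} [SFinite μ]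
  {Ω Ωd : Set α} {w : α → α → ℝ}

theorem integrable_integral_inflow_sub_outflow
    (hin : IntegrableOn (fun p : α × α => w p.2 p.1) (Ω ×ˢ (Ω ∪ Ωd)) (μ.prod μ))
    (hout : IntegrableOn (fun p : α × α => w p.1 p.2) (Ω ×ˢ (Ω ∪ Ωd)) (μ.prod μ)) :
    Integrable (fun x => ∫ y in Ω ∪ Ωd, (w y x - w x y) ∂μ) (μ.restrict Ω) := by
  have h := hin.sub hout
  rw [IntegrableOn, ← Measure.prod_restrict] at h
  exact h.integral_prod_left

theorem integral_inflow_sub_outflow_eq_neg_exit_flux (hΩ : MeasurableSet Ω)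
    (hΩd : MeasurableSet Ωd) (hdisj : Disjoint Ω Ωd) (hw : ∀ x ∈ Ωd, ∀ y, w x y = 0)
    (hin : IntegrableOn (fun p : α × α => w p.2 p.1) (Ω ×ˢ (Ω ∪ Ωd)) (μ.prod μ))
    (hout : IntegrableOn (fun p : α × α => w p.1 p.2) (Ω ×ˢ (Ω ∪ Ωd)) (μ.prod μ)) :
    ∫ x in Ω, ∫ y in Ω ∪ Ωd, (w y x - w x y) ∂μ ∂μ = -∫ x in Ω, ∫ y in Ωd, w x y ∂μ ∂μ := by
  have hinflow :
      ∫ p in Ω ×ˢ (Ω ∪ Ωd), w p.2 p.1 ∂μ.prod μ = ∫ p in Ω ×ˢ Ω, w p.1 p.2 ∂μ.prod μ := by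
    rw [← setIntegral_prod_swap Ω Ω (fun p : α × α => w p.1 p.2)]
    simp only [Prod.fst_swap, Prod.snd_swap]
    refine setIntegral_eq_of_subset_of_forall_sdiff_eq_zero (f := fun p : α × α => w p.2 p.1)
      (hΩ.prod (hΩ.union hΩd)) (prod_mono_right subset_union_left) fun p hp => ?_
    simp only [Set.mem_sdiff, mem_prod, mem_union, not_and] at hp
    exact hw _ (hp.1.2.resolve_left (hp.2 hp.1.1)) _
  have houtflow : ∫ p in Ω ×ˢ (Ω ∪ Ωd), w p.1 p.2 ∂μ.prod μ =
      ∫ p in Ω ×ˢ Ω, w p.1 p.2 ∂μ.prod μ + ∫ p in Ω ×ˢ Ωd, w p.1 p.2 ∂μ.prod μ := by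
    rw [prod_union]
    exact setIntegral_union (disjoint_prod.2 (Or.inr hdisj)) (hΩ.prod hΩd)
      (hout.mono_set (prod_mono_right subset_union_left))
      (hout.mono_set (prod_mono_right subset_union_right))
  calc ∫ x in Ω, ∫ y in Ω ∪ Ωd, (w y x - w x y) ∂μ ∂μ
      = ∫ p in Ω ×ˢ (Ω ∪ Ωd), (w p.2 p.1 - w p.1 p.2) ∂μ.prod μ :=
        (setIntegral_prod _ (hin.sub hout)).symm
    _ = -∫ p in Ω ×ˢ Ωd, w p.1 p.2 ∂μ.prod μ := by
        rw [integral_sub hin hout, hinflow, houtflow]; ring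
    _ = -∫ x in Ω, ∫ y in Ωd, w x y ∂μ ∂μ := by
        rw [setIntegral_prod _ (hout.mono_set (prod_mono_right subset_union_right))]

end Flux

section MassBalance

variable {α : Type*} [MeasurableSpace α] {μ : Measure α}
  {E : Type*} [NormedAddCommGroup E] [NormedSpace ℝ E]
  {u f : α → ℝ → E} {g : α → ℝ}

theorem lipschitzOnWith_integral_of_norm_hasDerivWithinAt_le {S : Set ℝ} (hS : Convex ℝ S)
    (hu : ∀ t ∈ S, Integrable (fun x => u x t) μ) (hg : Integrable g μ)
    (hderiv : ∀ᵐ x ∂μ, ∀ t ∈ S, HasDerivWithinAt (u x) (f x t) S t)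
    (hbound : ∀ᵐ x ∂μ, ∀ t ∈ S, ‖f x t‖ ≤ g x) :
    LipschitzOnWith (∫ x, g x ∂μ).toNNReal (fun t => ∫ x, u x t ∂μ) S := by
  refine LipschitzOnWith.of_dist_le_mul fun r hr s hs => ?_
  have hpointwise : ∀ᵐ x ∂μ, ‖u x r - u x s‖ ≤ g x * dist r s := by
    filter_upwards [hderiv, hbound] with x hxd hxb
    rw [dist_eq_norm]
    exact hS.norm_image_sub_le_of_norm_hasDerivWithin_le hxd hxb hs hr
  calc dist (∫ x, u x r ∂μ) (∫ x, u x s ∂μ) = ‖∫ x, (u x r - u x s) ∂μ‖ := by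
        rw [dist_eq_norm, integral_sub (hu r hr) (hu s hs)]
    _ ≤ ∫ x, g x * dist r s ∂μ := norm_integral_le_of_norm_le (hg.mul_const _) hpointwise
    _ = (∫ x, g x ∂μ) * dist r s := integral_mul_const _ _
    _ ≤ (∫ x, g x ∂μ).toNNReal * dist r s := by gcongr; exact Real.le_coe_toNNReal _

theorem intervalIntegral_integral_eq_sub_of_hasDerivWithinAt [CompleteSpace E] {a b : ℝ}
    (hab : a ≤ b)
    (hu : ∀ t ∈ Icc a b, Integrable (fun x => u x t) μ)
    (hf : ∀ t ∈ Ioo a b, AEStronglyMeasurable (fun x => f x t) μ) (hg : Integrable g μ)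
    (hderiv : ∀ᵐ x ∂μ, ∀ t ∈ Icc a b, HasDerivWithinAt (u x) (f x t) (Icc a b) t)
    (hbound : ∀ᵐ x ∂μ, ∀ t ∈ Icc a b, ‖f x t‖ ≤ g x)
    (hint : IntervalIntegrable (fun t => ∫ x, f x t ∂μ) volume a b) :
    ∫ t in a..b, ∫ x, f x t ∂μ = ∫ x, u x b ∂μ - ∫ x, u x a ∂μ := by
  have hcont : ContinuousOn (fun t => ∫ x, u x t ∂μ) (Icc a b) :=
    (lipschitzOnWith_integral_of_norm_hasDerivWithinAt_le (convex_Icc a b) hu hg hderiv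
      hbound).continuousOn
  refine intervalIntegral.integral_eq_sub_of_hasDeriv_right_of_le hab hcont (fun τ hτ => ?_) hint
  have hnhds : Ioo a b ∈ 𝓝 τ := Ioo_mem_nhds hτ.1 hτ.2
  refine (hasDerivAt_integral_of_dominated_loc_of_deriv_le (F := fun t x => u x t)
    (F' := fun t x => f x t) hnhds
    (eventually_of_mem hnhds fun t ht => (hu t (Ioo_subset_Icc_self ht)).aestronglyMeasurable)
    (hu τ (Ioo_subset_Icc_self hτ)) (hf τ hτ) ?_ hg ?_).2.hasDerivWithinAt
  · filter_upwards [hbound] with x hx t ht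
    exact hx t (Ioo_subset_Icc_self ht)
  · filter_upwards [hderiv] with x hx t ht
    exact (hx t (Ioo_subset_Icc_self ht)).hasDerivAt (Icc_mem_nhds ht.1 ht.2)

end MassBalance

theorem exit_time_integrated_flux_general {n : ℕ}
    (Ω Ωd : Set (Euc n)) (hΩ : MeasurableSet Ω) (hΩd : MeasurableSet Ωd)
    (hdisj : Disjoint Ω Ωd)
    (γ : Euc n → Euc n → ℝ)
    (u : Euc n → ℝ → ℝ)
    (hu : ∀ t : ℝ, 0 ≤ t → IntegrableOn (fun x => u x t) Ω)
    (hvc : ∀ t : ℝ, 0 ≤ t → ∀ x ∈ Ωd, u x t = 0)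
    (hint1 : ∀ t : ℝ, 0 ≤ t →
      IntegrableOn (fun p : Euc n × Euc n => u p.2 t * γ p.2 p.1) (Ω ×ˢ (Ω ∪ Ωd)))
    (hint2 : ∀ t : ℝ, 0 ≤ t →
      IntegrableOn (fun p : Euc n × Euc n => u p.1 t * γ p.1 p.2) (Ω ×ˢ (Ω ∪ Ωd)))
    (hderiv : ∀ x ∈ Ω, ∀ t : ℝ, 0 ≤ t →
      HasDerivAt (u x) (∫ y in Ω ∪ Ωd, (u y t * γ y x - u x t * γ x y)) t)
    (g : Euc n → ℝ) (hg : IntegrableOn g Ω)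
    (hbound : ∀ x ∈ Ω, ∀ t : ℝ, 0 ≤ t →
      |∫ y in Ω ∪ Ωd, (u y t * γ y x - u x t * γ x y)| ≤ g x)
    (hcont : ContinuousOn (fun s => ∫ x in Ω, ∫ y in Ωd, u x s * γ x y) (Set.Ici (0 : ℝ))) :
    ∀ t : ℝ, 0 ≤ t →
      (∫ x in Ω, u x t) =
        (∫ x in Ω, u x 0) - ∫ s in (0 : ℝ)..t, ∫ x in Ω, ∫ y in Ωd, u x s * γ x y := by
  intro t ht
  have hflux : ∀ s ≥ 0, ∫ x in Ω, ∫ y in Ω ∪ Ωd, (u y s * γ y x - u x s * γ x y) =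
      -∫ x in Ω, ∫ y in Ωd, u x s * γ x y := fun s hs =>
    integral_inflow_sub_outflow_eq_neg_exit_flux (w := fun x y => u x s * γ x y) hΩ hΩd hdisj
      (fun x hx y => by rw [hvc s hs x hx, zero_mul]) (hint1 s hs) (hint2 s hs)
  have hmass := intervalIntegral_integral_eq_sub_of_hasDerivWithinAt (μ := volume.restrict Ω)
    (f := fun x s => ∫ y in Ω ∪ Ωd, (u y s * γ y x - u x s * γ x y)) ht
    (fun s hs => hu s hs.1)
    (fun s hs => (integrable_integral_inflow_sub_outflow (hint1 s hs.1.le)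
      (hint2 s hs.1.le)).aestronglyMeasurable) hg
    ((ae_restrict_iff' hΩ).2 <| ae_of_all _ fun x hx s hs =>
      (hderiv x hx s hs.1).hasDerivWithinAt)
    ((ae_restrict_iff' hΩ).2 (ae_of_all _ fun x hx s hs => hbound x hx s hs.1))
    (((hcont.mono Icc_subset_Ici_self).neg.congr fun s hs => hflux s hs.1).intervalIntegrable_of_Icc
      ht)
  rw [intervalIntegral.integral_congr fun s hs => hflux s (by rw [uIcc_of_le ht] at hs; exact hs.1),
    intervalIntegral.integral_neg] at hmass
  linarith

/-- Exit-time flux balance: for the volume-constrained master equation on `Ω` with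
exit region `Ω_d`, the loss of probability mass from `Ω` up to time `t` equals the
time-integrated probability flux from `Ω` into `Ω_d`:
`∫_Ω u(x,t) dx = ∫_Ω u(x,0) dx − ∫_0^t ∫_Ω ∫_{Ω_d} u(x,s) γ(x,y) dy dx ds`. -/
theorem exit_time_integrated_flux {n : ℕ}
    (Ω Ωd : Set (Euc n)) (hΩ : MeasurableSet Ω) (hΩd : MeasurableSet Ωd)
    (hdisj : Disjoint Ω Ωd) (hΩfin : volume Ω < ⊤)
    (γ : Euc n → Euc n → ℝ)
    (u : Euc n → ℝ → ℝ)
    (hu : ∀ t : ℝ, 0 ≤ t → IntegrableOn (fun x => u x t) Ω)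
    (hvc : ∀ t : ℝ, 0 ≤ t → ∀ x ∈ Ωd, u x t = 0)
    (hint1 : ∀ t : ℝ, 0 ≤ t →
      IntegrableOn (fun p : Euc n × Euc n => u p.2 t * γ p.2 p.1) (Ω ×ˢ (Ω ∪ Ωd)))
    (hint2 : ∀ t : ℝ, 0 ≤ t →
      IntegrableOn (fun p : Euc n × Euc n => u p.1 t * γ p.1 p.2) (Ω ×ˢ (Ω ∪ Ωd)))
    (hderiv : ∀ x ∈ Ω, ∀ t : ℝ, 0 ≤ t →
      HasDerivAt (u x) (∫ y in Ω ∪ Ωd, (u y t * γ y x - u x t * γ x y)) t)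
    (g : Euc n → ℝ) (hg : IntegrableOn g Ω)
    (hbound : ∀ x ∈ Ω, ∀ t : ℝ, 0 ≤ t →
      |∫ y in Ω ∪ Ωd, (u y t * γ y x - u x t * γ x y)| ≤ g x)
    (hcont : ContinuousOn (fun s => ∫ x in Ω, ∫ y in Ωd, u x s * γ x y) (Set.Ici (0 : ℝ))) :
    ∀ t : ℝ, 0 ≤ t →
      (∫ x in Ω, u x t) =
        (∫ x in Ω, u x 0) - ∫ s in (0 : ℝ)..t, ∫ x in Ω, ∫ y in Ωd, u x s * γ x y :=
  exit_time_integrated_flux_general Ω Ωd hΩ hΩd hdisj γ u hu hvc hint1 hint2 hderiv g hg hbound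
    hcont
end
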